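/- Let 0 < Y < 2 and define J_Y(λ) = √(λ/(2π)) ∫_0^∞ e^{−λh/2} h^{(Y−1)/2} (1+h)^{−Y/2} dh for λ > 0. Then J_Y(λ) → 1 as λ → 0⁺. -/

import Mathlib

open MeasureTheory Real Set Filter

/-- `J_Y(λ) = √(λ/(2π)) ∫_0^∞ e^{-λh/2} h^{(Y-1)/2} (1+h)^{-Y/2} dh`. -/
noncomputable def JFun (Y l : ℝ) : ℝ :=
  Real.sqrt (l / (2 * π)) *
    ∫ h in Ioi (0:ℝ), Real.exp (-(l * h / 2)) * h ^ ((Y-1)/2) * (1+h) ^ (-(Y/2))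

/-!
The substitution `t = λh` turns `J_Y(λ)` into `(2π)^{-1/2} ∫_0^∞ e^{-t/2} t^{(Y-1)/2} (λ+t)^{-Y/2} dt`.
As `λ → 0⁺` the integrand increases to `e^{-t/2} t^{-1/2}`, which is integrable, so by dominated
convergence the integral tends to `∫_0^∞ e^{-t/2} t^{-1/2} dt = √2 Γ(1/2) = √(2π)`.
-/

open Topology

lemma integrableOn_exp_neg_half_mul_rpow {s : ℝ} (hs : -1 < s) :
    IntegrableOn (fun t : ℝ => exp (-(t / 2)) * t ^ s) (Ioi 0) := by
  refine (integrableOn_rpow_mul_exp_neg_mul_rpow hs one_pos one_half_pos).congr_fun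
    (fun t _ => ?_) measurableSet_Ioi
  dsimp only
  rw [rpow_one]
  ring_nf

lemma integral_exp_neg_half_mul_rpow_neg_half :
    ∫ t in Ioi (0:ℝ), exp (-(t / 2)) * t ^ (-(1 / 2 : ℝ)) = √(2 * π) := by
  have hΓ := integral_rpow_mul_exp_neg_mul_Ioi (a := 1 / 2) (r := 1 / 2) one_half_pos one_half_pos
  rw [show (1 / 2 : ℝ) - 1 = -(1 / 2) by norm_num, Gamma_one_half_eq,
    show (1 : ℝ) / (1 / 2) = 2 by norm_num, ← sqrt_eq_rpow, ← sqrt_mul zero_le_two] at hΓ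
  rw [← hΓ]
  refine setIntegral_congr_fun measurableSet_Ioi (fun t _ => ?_)
  ring_nf

lemma integral_exp_mul_rpow_mul_one_add_rpow {l : ℝ} (hl : 0 < l) (a b : ℝ) :
    ∫ h in Ioi (0:ℝ), exp (-(l * h / 2)) * h ^ a * (1 + h) ^ (-b) =
      l ^ (b - a - 1) * ∫ t in Ioi (0:ℝ), exp (-(t / 2)) * t ^ a * (l + t) ^ (-b) := by
  set g : ℝ → ℝ := fun t => exp (-(t / 2)) * t ^ a * (l + t) ^ (-b)
  have hsubst := integral_comp_mul_left_Ioi g 0 hl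
  rw [mul_zero, smul_eq_mul] at hsubst
  have hpow : l ^ (b - a) * l ^ a * l ^ (-b) = 1 := by
    rw [← rpow_add hl, ← rpow_add hl, show b - a + a + -b = 0 by ring, rpow_zero]
  calc ∫ h in Ioi (0:ℝ), exp (-(l * h / 2)) * h ^ a * (1 + h) ^ (-b)
      = ∫ h in Ioi (0:ℝ), l ^ (b - a) * g (l * h) := by
        refine setIntegral_congr_fun measurableSet_Ioi (fun h (hh : 0 < h) => ?_)
        simp only [g]
        rw [mul_rpow hl.le hh.le, show l + l * h = l * (1 + h) by ring,
          mul_rpow hl.le (by linarith), mul_div_assoc]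
        linear_combination (-(exp (-(l * (h / 2))) * h ^ a * (1 + h) ^ (-b))) * hpow
    _ = l ^ (b - a - 1) * ∫ t in Ioi (0:ℝ), g t := by
        rw [integral_const_mul, hsubst, rpow_sub_one hl.ne', div_eq_mul_inv, mul_assoc]

lemma tendsto_integral_exp_mul_rpow_mul_add_rpow {a b : ℝ} (hb : 0 ≤ b) (hab : -1 < a - b) :
    Tendsto (fun l => ∫ t in Ioi (0:ℝ), exp (-(t / 2)) * t ^ a * (l + t) ^ (-b))
      (𝓝[>] 0) (𝓝 (∫ t in Ioi (0:ℝ), exp (-(t / 2)) * t ^ (a - b))) := by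
  refine tendsto_integral_filter_of_dominated_convergence _
    (Eventually.of_forall fun l => by fun_prop) ?_
    (integrableOn_exp_neg_half_mul_rpow hab) ?_
  · filter_upwards [self_mem_nhdsWithin] with l (hl : 0 < l)
    refine (ae_restrict_iff' measurableSet_Ioi).2 (Eventually.of_forall fun t (ht : 0 < t) => ?_)
    rw [norm_of_nonneg (by positivity), sub_eq_add_neg, rpow_add ht, ← mul_assoc]
    exact mul_le_mul_of_nonneg_left
      (rpow_le_rpow_of_nonpos ht (le_add_of_nonneg_left hl.le) (neg_nonpos.2 hb)) (by positivity)
  · refine (ae_restrict_iff' measurableSet_Ioi).2 (Eventually.of_forall fun t (ht : 0 < t) => ?_)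
    have hcont : ContinuousAt (fun l : ℝ => exp (-(t / 2)) * t ^ a * (l + t) ^ (-b)) 0 :=
      ContinuousAt.mul continuousAt_const
        ((continuousAt_id.add continuousAt_const).rpow_const (Or.inl (by simpa using ht.ne')))
    have hval : exp (-(t / 2)) * t ^ a * (0 + t) ^ (-b) = exp (-(t / 2)) * t ^ (a - b) := by
      rw [zero_add, mul_assoc, ← rpow_add ht, sub_eq_add_neg]
    exact hval ▸ hcont.tendsto.mono_left nhdsWithin_le_nhds

lemma JFun_eq_integral_div_sqrt (Y : ℝ) {l : ℝ} (hl : 0 < l) :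
    JFun Y l = (∫ t in Ioi (0:ℝ), exp (-(t / 2)) * t ^ ((Y - 1) / 2) * (l + t) ^ (-(Y / 2))) /
      √(2 * π) := by
  have hpow : √l * l ^ (Y / 2 - (Y - 1) / 2 - 1) = 1 := by
    rw [sqrt_eq_rpow, ← rpow_add hl, show 1 / 2 + (Y / 2 - (Y - 1) / 2 - 1) = 0 by ring,
      rpow_zero]
  rw [JFun, integral_exp_mul_rpow_mul_one_add_rpow hl, sqrt_div hl.le, ← mul_assoc,
    div_mul_eq_mul_div, hpow, one_div_mul_eq_div]

/-- `J_Y(λ) → 1` as `λ → 0⁺`. -/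
theorem JFun_tendsto_one (Y : ℝ) (hY0 : 0 < Y) :
    Tendsto (fun l => JFun Y l) (nhdsWithin 0 (Ioi 0)) (nhds 1) := by
  have hlim := tendsto_integral_exp_mul_rpow_mul_add_rpow (a := (Y - 1) / 2) (b := Y / 2)
    (by linarith) (by linarith)
  rw [show (Y - 1) / 2 - Y / 2 = -(1 / 2 : ℝ) by ring,
    integral_exp_neg_half_mul_rpow_neg_half] at hlim
  rw [← div_self (show √(2 * π) ≠ 0 by positivity)]
  refine (hlim.div_const _).congr' ?_
  filter_upwards [self_mem_nhdsWithin] with l hl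
  exact (JFun_eq_integral_div_sqrt Y hl).symm
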